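/- Let G be a finite simple graph with 1 < Θ_REV(G) < |V(G)|. Then the Shannon capacity is controlled by the reversible capacity: Θ_REV(G) ≤ Θ(G) ≤ Θ_REV(G)^{log|V(G)| / (log|V(G)| − log Θ_REV(G))}. -/

import Mathlib

open Filter

/-- A language `L` over the vertices of `G` is distinguishable if any two distinct
equal-length words differ at some position by two non-adjacent, non-equal symbols. -/
def Distinguishable {V : Type*} (G : SimpleGraph V) (L : Set (List V)) : Prop :=
  ∀ x ∈ L, ∀ y ∈ L, x.length = y.length → x ≠ y →
    ∃ (i : ℕ) (hx : i < x.length) (hy : i < y.length),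
      x.get ⟨i, hx⟩ ≠ y.get ⟨i, hy⟩ ∧ ¬ G.Adj (x.get ⟨i, hx⟩) (y.get ⟨i, hy⟩)

/-- The growth rate of a language: `limsup |L(n)|^(1/n)`. -/
noncomputable def growthRate {V : Type*} (L : Set (List V)) : ℝ :=
  Filter.limsup (fun n : ℕ =>
    ((Set.ncard {w ∈ L | w.length = n} : ℕ) : ℝ) ^ (1 / (n : ℝ))) Filter.atTop

/-- The `n`-fold strong graph product of `G` with itself. -/
def strongPow {V : Type*} (G : SimpleGraph V) (n : ℕ) : SimpleGraph (Fin n → V) where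
  Adj x y := x ≠ y ∧ ∀ i, x i = y i ∨ G.Adj (x i) (y i)
  symm := by
    constructor
    rintro x y ⟨hne, h⟩
    exact ⟨hne.symm, fun i => (h i).imp Eq.symm (fun h' => h'.symm)⟩
  loopless := by constructor; rintro x ⟨hne, _⟩; exact hne rfl

/-- The independence number of a graph. -/
noncomputable def indepNum {V : Type*} (G : SimpleGraph V) : ℕ :=
  sSup {k | ∃ s : Set V, (s.Pairwise fun a b => ¬ G.Adj a b) ∧ s.ncard = k}

/-- The Shannon (zero-error) capacity `Θ(G) = sup_n α(G^{⊠n})^{1/n}`. -/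
noncomputable def shannonCapacity {V : Type*} (G : SimpleGraph V) : ℝ :=
  ⨆ n : ℕ, ((indepNum (strongPow G (n + 1)) : ℝ)) ^ (1 / ((n : ℝ) + 1))

/-- A reversible partial DFA: each symbol's partial transition function is injective
on its domain. -/
structure RevPartialDFA (α : Type*) where
  /-- the (finite) state space -/
  σ : Type
  /-- the state space is finite -/
  fintype : Fintype σ
  /-- partial transition function -/
  step : σ → α → Option σ
  /-- initial state -/
  start : σ
  /-- accepting states -/
  accept : Set σ
  /-- reversibility: transitions by a fixed symbol are injective where defined -/
  reversible : ∀ (a : α) (x y q : σ), step x a = some q → step y a = some q → x = y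

/-- The partial evaluation of a reversible partial DFA on a word (`none` if any
transition along the word is undefined). -/
def RevPartialDFA.eval {α : Type*} (M : RevPartialDFA α) (w : List α) : Option M.σ :=
  w.foldl (fun os a => os.bind fun s => M.step s a) (some M.start)

/-- The language accepted by a reversible partial DFA: all transitions defined and the
final state accepting. -/
def RevPartialDFA.accepts {α : Type*} (M : RevPartialDFA α) : Set (List α) :=
  {w | ∃ s ∈ M.accept, M.eval w = some s}

/-- The reversible capacity `Θ_REV(G)`: the supremum of growth rates over reversible
partial DFAs whose accepted language is distinguishable for `G`. -/
noncomputable def revCapacity {V : Type*} (G : SimpleGraph V) : ℝ :=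
  sSup {r : ℝ |
    ∃ M : RevPartialDFA V, Distinguishable G M.accepts ∧ growthRate M.accepts = r}

/-!
The lower bound holds because the words of length `m` of a distinguishable language form an
independent set of `G^{⊠m}`.

For the upper bound let `q = |V(G)|`, `r = Θ_REV(G)`, and let `S` be a maximum independent set
of `G^{⊠N}`, of size `α`. Give every `s ∈ S` an address `A s` of `k = ⌈log_q α⌉ + 1` letters.
The codewords `s ++ A s` are pairwise distinguishable, and their Kleene star is accepted by a
reversible partial DFA which first reads `s` letter by letter and then consumes `A s`: since the
address determines `s`, every state has at most one predecessor under each letter. Hence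
`α^{1/(N+k)} ≤ r`, that is `log α ≤ (N + 2 + log α / log q) log r`. Applied to `G^{⊠tN}`, whose
independence number is at least `α^t`, the additive constant vanishes as `t → ∞`, leaving
`log α / N ≤ log r · log q / (log q - log r)`.
-/

open Computability

namespace RevPartialDFA

variable {α τ : Type*}

def runFrom (step : τ → α → Option τ) (o : Option τ) (w : List α) : Option τ :=
  w.foldl (fun os a => os.bind fun s => step s a) o

section runFrom

variable (step : τ → α → Option τ)

@[simp] theorem runFrom_nil (o : Option τ) : runFrom step o [] = o := rfl

@[simp] theorem runFrom_none (w : List α) : runFrom step none w = none := by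
  induction w with
  | nil => rfl
  | cons a w ih => exact ih

@[simp] theorem runFrom_cons (q : τ) (a : α) (w : List α) :
    runFrom step (some q) (a :: w) = runFrom step (step q a) w := rfl

theorem runFrom_append (o : Option τ) (u w : List α) :
    runFrom step o (u ++ w) = runFrom step (runFrom step o u) w :=
  List.foldl_append ..

theorem runFrom_concat (q : τ) (u : List α) (a : α) :
    runFrom step (some q) (u ++ [a]) = (runFrom step (some q) u).bind (step · a) := by
  rw [runFrom_append]
  cases runFrom step (some q) u <;> rfl

end runFrom

theorem eval_eq_runFrom (M : RevPartialDFA α) (w : List α) :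
    M.eval w = runFrom M.step (some M.start) w := rfl

section ofInvariant

variable {Q : Set τ} {m : ℕ} (e : Q ≃ Fin m) (step : τ → α → Option τ) (start : Q)
  (accept : Set τ)

/-- The states of a `RevPartialDFA` must live in `Type`, so the invariant set `Q` of `step` is
renumbered along `e`. -/
abbrev ofInvariant (mapsTo : ∀ q ∈ Q, ∀ a q', step q a = some q' → q' ∈ Q)
    (injOn : ∀ a, ∀ x ∈ Q, ∀ y ∈ Q, ∀ q, step x a = some q → step y a = some q → x = y) :
    RevPartialDFA α where
  σ := Fin m
  fintype := inferInstance
  step i a := (step (e.symm i) a).pmap (fun q hq => e ⟨q, hq⟩)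
    fun q hq => mapsTo _ (e.symm i).2 a q hq
  start := e start
  accept := {i | (e.symm i : τ) ∈ accept}
  reversible a i j k hi hj := by
    obtain ⟨q, hq, hiq, rfl⟩ := Option.pmap_eq_some_iff.1 hi
    obtain ⟨q', hq', hjq', hqq'⟩ := Option.pmap_eq_some_iff.1 hj
    obtain rfl : q = q' := by simpa using hqq'
    exact e.symm.injective <| Subtype.ext <| injOn a _ (e.symm i).2 _ (e.symm j).2 q hiq hjq'

variable (mapsTo : ∀ q ∈ Q, ∀ a q', step q a = some q' → q' ∈ Q)
  (injOn : ∀ a, ∀ x ∈ Q, ∀ y ∈ Q, ∀ q, step x a = some q → step y a = some q → x = y)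

theorem map_runFrom_ofInvariant (w : List α) (x : Q) :
    (runFrom (ofInvariant e step start accept mapsTo injOn).step (some (e x)) w).map
      (fun i => (e.symm i : τ)) = runFrom step (some x) w := by
  induction w generalizing x with
  | nil => simp
  | cons a w ih =>
    simp only [runFrom_cons]
    cases hq : step x a with
    | none => simp [hq]
    | some q => simpa [hq] using ih ⟨q, mapsTo x x.2 a q hq⟩

theorem accepts_ofInvariant :
    (ofInvariant e step start accept mapsTo injOn).accepts =
      {w | ∃ t ∈ accept, runFrom step (some start) w = some t} := by
  ext w
  simp [accepts, eval_eq_runFrom,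
    ← map_runFrom_ofInvariant e step start accept mapsTo injOn w start]

end ofInvariant

end RevPartialDFA

namespace SimpleGraph

variable {V : Type*} (G : SimpleGraph V)

def Apart (x y : List V) : Prop :=
  ∃ (i : ℕ) (hx : i < x.length) (hy : i < y.length),
    x.get ⟨i, hx⟩ ≠ y.get ⟨i, hy⟩ ∧ ¬ G.Adj (x.get ⟨i, hx⟩) (y.get ⟨i, hy⟩)

variable {G}

theorem Apart.append_right {x y : List V} (h : G.Apart x y) (x' y' : List V) :
    G.Apart (x ++ x') (y ++ y') := by
  obtain ⟨i, hx, hy, hne, hadj⟩ := h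
  refine ⟨i, by simp; omega, by simp; omega, ?_⟩
  simpa [List.getElem_append_left hx, List.getElem_append_left hy] using ⟨hne, hadj⟩

theorem Apart.append_left {x' y' : List V} (h : G.Apart x' y') {x y : List V}
    (hxy : x.length = y.length) : G.Apart (x ++ x') (y ++ y') := by
  obtain ⟨i, hx, hy, hne, hadj⟩ := h
  refine ⟨x.length + i, by simp; omega, by simp; omega, ?_⟩
  simpa [List.getElem_append_right, hxy] using ⟨hne, hadj⟩

theorem apart_ofFn_iff_not_adj {m : ℕ} {s t : Fin m → V} (hst : s ≠ t) :
    G.Apart (List.ofFn s) (List.ofFn t) ↔ ¬ (strongPow G m).Adj s t := by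
  simp only [Apart, strongPow, List.length_ofFn, List.get_eq_getElem, List.getElem_ofFn, ne_eq,
    hst, not_false_eq_true, true_and, not_forall, not_or]
  exact ⟨fun ⟨i, hi, _, h⟩ => ⟨⟨i, hi⟩, h⟩, fun ⟨i, h⟩ => ⟨i, i.2, i.2, h⟩⟩

end SimpleGraph

section

variable {V : Type*}

section blockCode

variable (W : Set (List V)) (A : List V → List V)

def blockCode : Language V := (fun w => w ++ A w) '' W

open Classical in
/-- In state `inl p` the automaton has read the prefix `p` of a word of `W`; in state `inr v`
it still has to read the suffix `v` of that word's address. -/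
noncomputable def blockCodeStep (n : ℕ) : List V ⊕ List V → V → Option (List V ⊕ List V)
  | .inl p, a =>
    if p.length + 1 < n then some (.inl (p ++ [a]))
    else if p ++ [a] ∈ W then some (.inr (A (p ++ [a]))) else none
  | .inr [], _ => none
  | .inr (b :: v), a => if b = a then some (if v = [] then .inl [] else .inr v) else none

/-- An invariant of the runs from `inl []`: a word leading to a state is a product of codewords
followed by the part of the current codeword that the state records. -/
def blockCodeReach : List V ⊕ List V → Set (List V)
  | .inl p => {w | ∃ u ∈ (blockCode W A)∗, w = u ++ p}
  | .inr v => {w | ∃ u ∈ (blockCode W A)∗, ∃ r, w = u ++ r ∧ r ++ v ∈ blockCode W A}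

variable (V) in
def blockCodeStates (n k : ℕ) : Set (List V ⊕ List V) :=
  {x | x.elim (fun p => p.length < n) (fun v => v ≠ [] ∧ v.length ≤ k)}

variable {W A}

theorem ncard_blockCode {n : ℕ} (hW : ∀ w ∈ W, w.length = n) :
    Set.ncard (blockCode W A) = W.ncard :=
  Set.InjOn.ncard_image fun w hw w' hw' h =>
    (List.append_inj h ((hW w hw).trans (hW w' hw').symm)).1

theorem length_mem_blockCode {n k : ℕ} (hW : ∀ w ∈ W, w.length = n)
    (hA : ∀ w ∈ W, (A w).length = k) : ∀ c ∈ blockCode W A, c.length = n + k := by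
  rintro _ ⟨w, hw, rfl⟩
  simp [hW w hw, hA w hw]

theorem blockCodeStep_reach {n : ℕ} {t t' : List V ⊕ List V} {w : List V} {a : V}
    (hw : w ∈ blockCodeReach W A t) (ht : blockCodeStep W A n t a = some t') :
    w ++ [a] ∈ blockCodeReach W A t' := by
  rcases t with p | _ | ⟨b, v⟩
  · obtain ⟨u, hu, rfl⟩ := hw
    simp only [blockCodeStep] at ht
    split_ifs at ht with hp hW <;> cases ht
    · exact ⟨u, hu, by simp⟩
    · exact ⟨u, hu, p ++ [a], by simp, ⟨p ++ [a], hW, rfl⟩⟩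
  · cases ht
  · obtain ⟨u, hu, r, rfl, hr⟩ := hw
    simp only [blockCodeStep] at ht
    split_ifs at ht with hb hv <;> cases ht
    · subst hb hv
      exact ⟨u ++ (r ++ [b]),
        kstar_mul_le_kstar (a := blockCode W A) (Language.append_mem_mul hu hr), by simp⟩
    · subst hb
      exact ⟨u, hu, r ++ [b], by simp, by simpa using hr⟩

theorem mem_blockCodeReach_of_runFrom {n : ℕ} {w : List V} {t : List V ⊕ List V}
    (ht : RevPartialDFA.runFrom (blockCodeStep W A n) (some (.inl [])) w = some t) :
    w ∈ blockCodeReach W A t := by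
  induction w using List.reverseRecOn generalizing t with
  | nil => cases ht; exact ⟨[], Language.nil_mem_kstar _, rfl⟩
  | append_singleton w a ih =>
    rw [RevPartialDFA.runFrom_concat, Option.bind_eq_some_iff] at ht
    obtain ⟨t₀, ht₀, ht⟩ := ht
    exact blockCodeStep_reach (ih ht₀) ht

theorem runFrom_blockCodeStep_prefix {n : ℕ} (x p : List V) (hx : (p ++ x).length < n) :
    RevPartialDFA.runFrom (blockCodeStep W A n) (some (.inl p)) x = some (.inl (p ++ x)) := by
  induction x generalizing p with
  | nil => simp
  | cons a x ih =>
    have hp : p.length + 1 < n := by simp at hx; omega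
    simpa [blockCodeStep, hp] using ih (p ++ [a]) (by simpa using hx)

theorem runFrom_blockCodeStep_of_mem {n : ℕ} (hn : 0 < n) (hW : ∀ w ∈ W, w.length = n)
    {w : List V} (hw : w ∈ W) :
    RevPartialDFA.runFrom (blockCodeStep W A n) (some (.inl [])) w = some (.inr (A w)) := by
  obtain ⟨p, a, rfl⟩ := (List.eq_nil_or_concat' w).resolve_left
    (by rintro rfl; simp [← hW _ hw] at hn)
  have hp : p.length + 1 = n := by simpa using hW _ hw
  rw [RevPartialDFA.runFrom_concat, runFrom_blockCodeStep_prefix p [] (by simp; omega)]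
  simp [blockCodeStep, hp, hw]

theorem runFrom_blockCodeStep_address (n : ℕ) (v : List V) (hv : v ≠ []) :
    RevPartialDFA.runFrom (blockCodeStep W A n) (some (.inr v)) v = some (.inl []) := by
  induction v with
  | nil => contradiction
  | cons b v ih =>
    rcases eq_or_ne v [] with rfl | hv'
    · simp [blockCodeStep]
    · simpa [blockCodeStep, hv'] using ih hv'

theorem runFrom_blockCodeStep_kstar {n : ℕ} (hn : 0 < n) (hW : ∀ w ∈ W, w.length = n)
    (hA : ∀ w ∈ W, A w ≠ []) {x : List V} (hx : x ∈ (blockCode W A)∗) :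
    RevPartialDFA.runFrom (blockCodeStep W A n) (some (.inl [])) x = some (.inl []) := by
  obtain ⟨L, rfl, hL⟩ := Language.mem_kstar.1 hx
  clear hx
  induction L with
  | nil => rfl
  | cons c L ih =>
    obtain ⟨w, hw, rfl⟩ := hL c (by simp)
    rw [List.flatten_cons, RevPartialDFA.runFrom_append, RevPartialDFA.runFrom_append,
      runFrom_blockCodeStep_of_mem hn hW hw, runFrom_blockCodeStep_address n _ (hA w hw)]
    exact ih fun y hy => hL y (by simp [hy])

theorem blockCodeStates_finite [Finite V] (n k : ℕ) : (blockCodeStates V n k).Finite := by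
  refine (((List.finite_length_lt V n).image Sum.inl).union
    ((List.finite_length_le V k).image Sum.inr)).subset ?_
  rintro (p | v) h <;> simp_all [blockCodeStates]

theorem blockCodeStep_mapsTo {n k : ℕ} (hn : 0 < n) (hk : 0 < k)
    (hA : ∀ w ∈ W, (A w).length = k) :
    ∀ x ∈ blockCodeStates V n k, ∀ a y, blockCodeStep W A n x a = some y →
      y ∈ blockCodeStates V n k := by
  rintro (p | _ | ⟨b, v⟩) hx a y hy <;> simp only [blockCodeStep] at hy
  · split_ifs at hy with hp hW <;> cases hy
    · simpa [blockCodeStates] using hp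
    · simp [blockCodeStates, ← List.length_pos_iff, hA _ hW, hk]
  · cases hy
  · split_ifs at hy with hb hv <;> cases hy
    · exact hn
    · simp only [blockCodeStates, Set.mem_ofPred_eq, Sum.elim_inr, List.length_cons] at hx ⊢
      exact ⟨hv, by omega⟩

/-- An `inr` state is entered from phase one with an address of length `k`, and from another
`inr` state with a shorter suffix; the first kind of predecessor is unique because `A` is
injective on `W`. -/
theorem blockCodeStep_injOn {n k : ℕ} (hA : Set.InjOn A W) (hAk : ∀ w ∈ W, (A w).length = k)
    (a : V) : ∀ x ∈ blockCodeStates V n k, ∀ y ∈ blockCodeStates V n k, ∀ z,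
      blockCodeStep W A n x a = some z → blockCodeStep W A n y a = some z → x = y := by
  rintro (p | _ | ⟨b, v⟩) hx (p' | _ | ⟨b', v'⟩) hy z hxz hyz
  all_goals simp only [blockCodeStep] at hxz hyz
  all_goals (try split_ifs at hxz hyz)
  all_goals simp_all [blockCodeStates]
  all_goals subst_vars
  all_goals simp_all
  · simpa using (hA ‹p' ++ [a] ∈ W› ‹p ++ [a] ∈ W› hyz).symm
  all_goals have := hAk _ ‹_›; simp_all

theorem exists_revPartialDFA_accepts_eq_kstar_blockCode [Finite V] {n k : ℕ} (hn : 0 < n)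
    (hk : 0 < k) (hW : ∀ w ∈ W, w.length = n) (hA : Set.InjOn A W)
    (hAk : ∀ w ∈ W, (A w).length = k) :
    ∃ M : RevPartialDFA V, M.accepts = (blockCode W A)∗ := by
  have := (blockCodeStates_finite (V := V) n k).to_subtype
  refine ⟨RevPartialDFA.ofInvariant (Finite.equivFin _) (blockCodeStep W A n)
    ⟨.inl [], hn⟩ {.inl []} (blockCodeStep_mapsTo hn hk hAk) (blockCodeStep_injOn hA hAk), ?_⟩
  rw [RevPartialDFA.accepts_ofInvariant]
  ext w
  simp only [Set.mem_singleton_iff, exists_eq_left, Set.mem_ofPred_eq]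
  refine ⟨fun h => ?_, runFrom_blockCodeStep_kstar hn hW fun w hw => ?_⟩
  · obtain ⟨u, hu, rfl⟩ := mem_blockCodeReach_of_runFrom h
    rw [List.append_nil]
    exact hu
  · simp [← List.length_pos_iff, hAk w hw, hk]

end blockCode

section Distinguishable

variable {G : SimpleGraph V}

theorem Distinguishable.apart {L : Set (List V)} (h : Distinguishable G L) {x y : List V}
    (hx : x ∈ L) (hy : y ∈ L) (hxy : x.length = y.length) (hne : x ≠ y) : G.Apart x y :=
  h x hx y hy hxy hne

theorem Distinguishable.kstar {C : Language V} {ℓ : ℕ} (hC : ∀ c ∈ C, c.length = ℓ)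
    (h : Distinguishable G C) : Distinguishable G (C∗ : Language V) := by
  rintro _ ⟨L, rfl, hL⟩ _ ⟨L', rfl, hL'⟩ hlen hne
  induction L generalizing L' with
  | nil => exact (hne (List.eq_nil_of_length_eq_zero hlen.symm).symm).elim
  | cons c L ih =>
    cases L' with
    | nil => exact (hne (List.eq_nil_of_length_eq_zero hlen)).elim
    | cons c' L' =>
      simp only [List.mem_cons, forall_eq_or_imp, List.flatten_cons, List.length_append]
        at hL hL' hlen hne
      show G.Apart (c ++ L.flatten) (c' ++ L'.flatten)
      by_cases hcc' : c = c'
      · subst hcc'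
        exact SimpleGraph.Apart.append_left (ih hL.2 L' hL'.2 (by omega) (by simpa using hne)) rfl
      · exact (h.apart hL.1 hL'.1 ((hC c hL.1).trans (hC c' hL'.1).symm) hcc').append_right _ _

theorem Distinguishable.blockCode {W : Set (List V)} {n : ℕ} (hW : ∀ w ∈ W, w.length = n)
    (h : Distinguishable G W) (A : List V → List V) :
    Distinguishable G (blockCode W A : Language V) := by
  rintro _ ⟨w, hw, rfl⟩ _ ⟨w', hw', rfl⟩ - hne
  have hww' : w ≠ w' := by rintro rfl; exact hne rfl
  exact (h.apart hw hw' ((hW w hw).trans (hW w' hw').symm) hww').append_right _ _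

end Distinguishable

section count

variable (V) in
theorem ncard_length_eq [Fintype V] (m : ℕ) :
    {w : List V | w.length = m}.ncard = Fintype.card V ^ m := by
  rw [← Nat.card_coe_set_eq]
  exact (Nat.card_eq_fintype_card (α := List.Vector V m)).trans (card_vector m)

theorem pow_ncard_le_ncard_length_eq [Finite V] {C L : Set (List V)} {ℓ : ℕ}
    (hC : ∀ c ∈ C, c.length = ℓ) (hL : [] ∈ L) (hCL : ∀ c ∈ C, ∀ w ∈ L, c ++ w ∈ L)
    (m : ℕ) : C.ncard ^ m ≤ {w ∈ L | w.length = m * ℓ}.ncard := by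
  induction m with
  | zero =>
    rw [pow_zero, Set.ncard_eq_one.2 ⟨[], ?_⟩]
    ext w
    simpa [List.length_eq_zero_iff] using fun h => h ▸ hL
  | succ m ih =>
    calc C.ncard ^ (m + 1) = C.ncard * C.ncard ^ m := pow_succ' ..
      _ ≤ C.ncard * {w ∈ L | w.length = m * ℓ}.ncard := Nat.mul_le_mul_left _ ih
      _ = (C ×ˢ {w ∈ L | w.length = m * ℓ}).ncard := Set.ncard_prod.symm
      _ = ((fun p => p.1 ++ p.2) '' (C ×ˢ {w ∈ L | w.length = m * ℓ})).ncard := by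
        refine (Set.InjOn.ncard_image ?_).symm
        rintro ⟨c, w⟩ ⟨hc, -⟩ ⟨c', w'⟩ ⟨hc', -⟩ h
        obtain ⟨rfl, rfl⟩ := List.append_inj h ((hC c hc).trans (hC c' hc').symm)
        rfl
      _ ≤ _ := by
        refine Set.ncard_le_ncard ?_ ((List.finite_length_eq V _).subset fun w hw => hw.2)
        rintro _ ⟨⟨c, w⟩, ⟨hc, hw, hlen⟩, rfl⟩
        refine ⟨hCL c hc w hw, ?_⟩
        simp only [List.length_append, hC c hc, hlen]
        ring

theorem pow_ncard_le_ncard_kstar [Finite V] {C : Language V} {ℓ : ℕ}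
    (hC : ∀ c ∈ C, c.length = ℓ) (m : ℕ) :
    Set.ncard C ^ m ≤ Set.ncard {w ∈ C∗ | w.length = m * ℓ} :=
  pow_ncard_le_ncard_length_eq hC (Language.nil_mem_kstar C)
    (fun _ hc _ hw => mul_kstar_le_kstar (a := C) (Language.append_mem_mul hc hw)) m

theorem exists_injOn_length_eq [Fintype V] {W : Set (List V)} (hW : W.Finite) {k : ℕ}
    (h : W.ncard ≤ Fintype.card V ^ k) :
    ∃ A : List V → List V, Set.InjOn A W ∧ ∀ w ∈ W, (A w).length = k := by
  classical
  have := hW.fintype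
  obtain ⟨f⟩ := Function.Embedding.nonempty_of_card_le (α := W) (β := List.Vector V k)
    (by rwa [card_vector, ← Nat.card_eq_fintype_card, Nat.card_coe_set_eq])
  refine ⟨fun w => if hw : w ∈ W then (f ⟨w, hw⟩).1 else [], fun w hw w' hw' hA => ?_,
    fun w hw => by simp [hw]⟩
  simp only [dif_pos hw, dif_pos hw'] at hA
  exact congrArg Subtype.val (f.injective (Subtype.ext hA))

end count

section growthRate

theorem growthRate_le_of_forall_le {L : Set (List V)} {B : ℝ}
    (h : ∀ m : ℕ, 0 < m → ((Set.ncard {w ∈ L | w.length = m} : ℕ) : ℝ) ^ (1 / (m : ℝ)) ≤ B) :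
    growthRate L ≤ B :=
  limsup_le_of_le (isBoundedUnder_of ⟨0, fun _ => by positivity⟩).isCoboundedUnder_le
    (eventually_atTop.2 ⟨1, h⟩)

theorem rpow_ncard_length_eq_le_card [Fintype V] (L : Set (List V)) {m : ℕ} (hm : 0 < m) :
    ((Set.ncard {w ∈ L | w.length = m} : ℕ) : ℝ) ^ (1 / (m : ℝ)) ≤ Fintype.card V := by
  rw [one_div, Real.rpow_inv_le_iff_of_pos (by positivity) (by positivity) (by positivity),
    Real.rpow_natCast, ← Nat.cast_pow, ← ncard_length_eq, Nat.cast_le]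
  exact Set.ncard_le_ncard (fun w hw => hw.2) (List.finite_length_eq V m)

theorem le_growthRate_of_pow_le [Fintype V] {L : Set (List V)} {c ℓ : ℕ} (hℓ : 0 < ℓ)
    (h : ∀ m, c ^ m ≤ {w ∈ L | w.length = m * ℓ}.ncard) :
    (c : ℝ) ^ (1 / (ℓ : ℝ)) ≤ growthRate L := by
  refine le_limsup_of_frequently_le (frequently_atTop.2 fun a => ⟨(a + 1) * ℓ,
    (Nat.le_succ a).trans (Nat.le_mul_of_pos_right _ hℓ), ?_⟩)
    (isBoundedUnder_of_eventually_le (eventually_atTop.2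
      ⟨1, fun m hm => rpow_ncard_length_eq_le_card L hm⟩))
  rw [one_div (((a + 1) * ℓ : ℕ) : ℝ), Real.le_rpow_inv_iff_of_pos (by positivity)
    (by positivity) (by positivity), ← Real.rpow_mul (by positivity)]
  have : 1 / (ℓ : ℝ) * (((a + 1) * ℓ : ℕ) : ℝ) = ((a + 1 : ℕ) : ℝ) := by
    push_cast
    field_simp
  rw [this, Real.rpow_natCast]
  exact_mod_cast h (a + 1)

end growthRate

section indepNum

variable {W : Type*} [Finite W] (H : SimpleGraph W)

theorem bddAbove_ncard_isIndepSet :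
    BddAbove {k | ∃ s : Set W, H.IsIndepSet s ∧ s.ncard = k} :=
  ⟨Nat.card W, by rintro _ ⟨s, -, rfl⟩; exact Set.ncard_le_card s⟩

variable {H} in
theorem ncard_le_indepNum {s : Set W} (hs : H.IsIndepSet s) : s.ncard ≤ indepNum H :=
  le_csSup (bddAbove_ncard_isIndepSet H) ⟨s, hs, rfl⟩

theorem exists_isIndepSet_ncard_eq_indepNum :
    ∃ s : Set W, H.IsIndepSet s ∧ s.ncard = indepNum H :=
  Nat.sSup_mem (s := {k | ∃ s : Set W, H.IsIndepSet s ∧ s.ncard = k})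
    ⟨0, ∅, by simp, by simp⟩ (bddAbove_ncard_isIndepSet H)

theorem indepNum_le_card : indepNum H ≤ Nat.card W := by
  obtain ⟨s, -, hs⟩ := exists_isIndepSet_ncard_eq_indepNum H
  exact hs ▸ Set.ncard_le_card s

theorem one_le_indepNum [Nonempty W] : 1 ≤ indepNum H := by
  simpa using
    ncard_le_indepNum (Set.pairwise_singleton (Classical.arbitrary W) _ : H.IsIndepSet _)

end indepNum

section strongPow

variable (G : SimpleGraph V)

theorem exists_distinguishable_ncard_eq_indepNum [Finite V] (m : ℕ) :
    ∃ W : Set (List V), Distinguishable G W ∧ (∀ w ∈ W, w.length = m) ∧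
      W.ncard = indepNum (strongPow G m) := by
  obtain ⟨s, hs, hcard⟩ := exists_isIndepSet_ncard_eq_indepNum (strongPow G m)
  refine ⟨List.ofFn '' s, ?_, by simp,
    by rwa [Set.ncard_image_of_injective _ List.ofFn_injective]⟩
  rintro _ ⟨x, hx, rfl⟩ _ ⟨y, hy, rfl⟩ - hne
  have hxy : x ≠ y := by rintro rfl; exact hne rfl
  exact (SimpleGraph.apart_ofFn_iff_not_adj hxy).2 (hs hx hy hxy)

variable {G} in
theorem Distinguishable.ncard_length_eq_le_indepNum [Finite V] {L : Set (List V)}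
    (h : Distinguishable G L) (m : ℕ) :
    {w ∈ L | w.length = m}.ncard ≤ indepNum (strongPow G m) := by
  have hL : {w ∈ L | w.length = m} = List.ofFn '' {s : Fin m → V | List.ofFn s ∈ L} := by
    ext w
    constructor
    · rintro ⟨hw, rfl⟩
      exact ⟨fun i => w[i], by simpa using hw, by simp⟩
    · rintro ⟨s, hs, rfl⟩
      exact ⟨hs, by simp⟩
  rw [hL, Set.ncard_image_of_injective _ List.ofFn_injective]
  refine ncard_le_indepNum fun s hs t ht hst => ?_
  exact (SimpleGraph.apart_ofFn_iff_not_adj hst).1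
    (h.apart hs ht (by simp) (List.ofFn_injective.ne hst))

theorem indepNum_strongPow_pow_le [Finite V] (m t : ℕ) :
    indepNum (strongPow G m) ^ t ≤ indepNum (strongPow G (t * m)) := by
  obtain ⟨W, hW, hWm, hWcard⟩ := exists_distinguishable_ncard_eq_indepNum G m
  exact hWcard ▸ (pow_ncard_le_ncard_kstar (C := W) hWm t).trans
    ((Distinguishable.kstar (C := W) hWm hW).ncard_length_eq_le_indepNum _)

theorem indepNum_strongPow_le_card_pow [Fintype V] (m : ℕ) :
    indepNum (strongPow G m) ≤ Fintype.card V ^ m :=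
  (indepNum_le_card _).trans_eq (by simp)

end strongPow

section capacity

variable [Fintype V] {G : SimpleGraph V}

variable (G) in
theorem indepNum_rpow_le_shannonCapacity {m : ℕ} (hm : 0 < m) :
    (indepNum (strongPow G m) : ℝ) ^ (1 / (m : ℝ)) ≤ shannonCapacity G := by
  have hbdd : BddAbove (Set.range fun j : ℕ =>
      (indepNum (strongPow G (j + 1)) : ℝ) ^ (1 / ((j : ℝ) + 1))) := by
    refine ⟨Fintype.card V, ?_⟩
    rintro _ ⟨j, rfl⟩
    dsimp only
    rw [one_div, Real.rpow_inv_le_iff_of_pos (by positivity) (by positivity) (by positivity)]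
    exact_mod_cast indepNum_strongPow_le_card_pow G (j + 1)
  obtain ⟨j, rfl⟩ : ∃ j, m = j + 1 := ⟨m - 1, by omega⟩
  simpa [shannonCapacity] using le_ciSup hbdd j

theorem Distinguishable.growthRate_le_shannonCapacity {L : Set (List V)}
    (h : Distinguishable G L) : growthRate L ≤ shannonCapacity G :=
  growthRate_le_of_forall_le fun m hm =>
    (Real.rpow_le_rpow (by positivity) (by exact_mod_cast h.ncard_length_eq_le_indepNum m)
      (by positivity)).trans (indepNum_rpow_le_shannonCapacity G hm)

variable (G) in
theorem revCapacity_le_shannonCapacity : revCapacity G ≤ shannonCapacity G :=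
  Real.sSup_le (by rintro _ ⟨M, hM, rfl⟩; exact hM.growthRate_le_shannonCapacity)
    (Real.iSup_nonneg fun _ => by positivity)

theorem Distinguishable.growthRate_accepts_le_revCapacity {M : RevPartialDFA V}
    (h : Distinguishable G M.accepts) : growthRate M.accepts ≤ revCapacity G :=
  le_csSup ⟨shannonCapacity G, by rintro _ ⟨M, hM, rfl⟩; exact hM.growthRate_le_shannonCapacity⟩
    ⟨M, h, rfl⟩

variable (G) in
theorem indepNum_rpow_le_revCapacity {N k : ℕ} (hN : 0 < N) (hk : 0 < k)
    (h : indepNum (strongPow G N) ≤ Fintype.card V ^ k) :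
    (indepNum (strongPow G N) : ℝ) ^ (1 / ((N + k : ℕ) : ℝ)) ≤ revCapacity G := by
  obtain ⟨W, hW, hWn, hWcard⟩ := exists_distinguishable_ncard_eq_indepNum G N
  obtain ⟨A, hA, hAk⟩ :=
    exists_injOn_length_eq ((List.finite_length_eq V N).subset hWn) (hWcard ▸ h)
  obtain ⟨M, hM⟩ := exists_revPartialDFA_accepts_eq_kstar_blockCode hN hk hWn hA hAk
  have hC := length_mem_blockCode hWn hAk
  calc (indepNum (strongPow G N) : ℝ) ^ (1 / ((N + k : ℕ) : ℝ))
      ≤ growthRate M.accepts := by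
        rw [hM, ← hWcard, ← ncard_blockCode (A := A) hWn]
        exact le_growthRate_of_pow_le (by omega) (pow_ncard_le_ncard_kstar hC)
    _ ≤ revCapacity G := by
        refine Distinguishable.growthRate_accepts_le_revCapacity ?_
        rw [hM]
        exact (hW.blockCode hWn A).kstar hC

end capacity

theorem natCast_clog_lt_logb_add_one {b n : ℕ} (hb : 1 < b) (hn : 1 ≤ n) :
    (Nat.clog b n : ℝ) < Real.logb b n + 1 := by
  rw [← Real.natCeil_logb_natCast]
  exact Nat.ceil_lt_add_one (Real.logb_nonneg (by exact_mod_cast hb) (by exact_mod_cast hn))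

theorem le_of_forall_nat_mul_le_mul_add {a b d : ℝ}
    (h : ∀ t : ℕ, 0 < t → t * a ≤ t * b + d) : a ≤ b := by
  by_contra! hba
  obtain ⟨t, ht⟩ := exists_nat_gt (d / (a - b))
  rw [div_lt_iff₀ (sub_pos.2 hba)] at ht
  have := h (t + 1) t.succ_pos
  push_cast at this
  nlinarith

section upperBound

variable [Fintype V] (G : SimpleGraph V)

theorem log_indepNum_mul_le_add_two (h1 : 1 < revCapacity G)
    (h2 : revCapacity G < Fintype.card V) {N : ℕ} (hN : 0 < N) :
    Real.log (indepNum (strongPow G N)) *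
        (Real.log (Fintype.card V) - Real.log (revCapacity G)) ≤
      (N + 2) * (Real.log (revCapacity G) * Real.log (Fintype.card V)) := by
  set q := Fintype.card V
  set α := indepNum (strongPow G N)
  set ρ := Real.log (revCapacity G)
  set L := Real.log q
  have hq : 1 < q := by exact_mod_cast h1.trans h2
  have : Nonempty V := Fintype.card_pos_iff.1 (by omega)
  have hα : 1 ≤ α := one_le_indepNum _
  have hρ : 0 < ρ := Real.log_pos h1
  have hL : 0 < L := Real.log_pos (by exact_mod_cast hq)
  set k := Nat.clog q α + 1
  have hαk : α ≤ q ^ k := (Nat.le_pow_clog hq α).trans 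
    (Nat.pow_le_pow_right (by omega) (Nat.le_succ _))
  have hlog : Real.log α ≤ (N + k) * ρ := by
    have := Real.log_le_log (by positivity) (indepNum_rpow_le_revCapacity G hN (by omega) hαk)
    rw [Real.log_rpow (by positivity), one_div, inv_mul_le_iff₀ (by positivity)] at this
    exact_mod_cast this
  have hk : (k : ℝ) ≤ Real.log α / L + 2 := by
    have := natCast_clog_lt_logb_add_one hq hα
    rw [Real.logb] at this
    push_cast [k]
    linarith
  have hlog' : Real.log α ≤ (N + (Real.log α / L + 2)) * ρ :=
    hlog.trans (mul_le_mul_of_nonneg_right (by linarith) hρ.le)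
  have hαL : Real.log α / L * L = Real.log α := div_mul_cancel₀ _ hL.ne'
  nlinarith [mul_le_mul_of_nonneg_right hlog' hL.le]

theorem log_indepNum_mul_le (h1 : 1 < revCapacity G) (h2 : revCapacity G < Fintype.card V)
    {m : ℕ} (hm : 0 < m) :
    Real.log (indepNum (strongPow G m)) *
        (Real.log (Fintype.card V) - Real.log (revCapacity G)) ≤
      m * (Real.log (revCapacity G) * Real.log (Fintype.card V)) := by
  have : Nonempty V :=
    Fintype.card_pos_iff.1 (by exact_mod_cast (zero_lt_one.trans h1).trans h2)
  have hLρ : 0 ≤ Real.log (Fintype.card V) - Real.log (revCapacity G) :=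
    sub_nonneg.2 (Real.log_le_log (zero_lt_one.trans h1) h2.le)
  refine le_of_forall_nat_mul_le_mul_add
    (d := 2 * (Real.log (revCapacity G) * Real.log (Fintype.card V))) fun t ht => ?_
  have hpow : t * Real.log (indepNum (strongPow G m)) ≤
      Real.log (indepNum (strongPow G (t * m))) := by
    rw [← Real.log_pow]
    exact Real.log_le_log (by have := one_le_indepNum (strongPow G m); positivity)
      (by exact_mod_cast indepNum_strongPow_pow_le G m t)
  have := log_indepNum_mul_le_add_two G h1 h2 (N := t * m) (by positivity)
  push_cast at this
  nlinarith [mul_le_mul_of_nonneg_right hpow hLρ]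

theorem indepNum_rpow_le_rpow_revCapacity (h1 : 1 < revCapacity G)
    (h2 : revCapacity G < Fintype.card V) {m : ℕ} (hm : 0 < m) :
    (indepNum (strongPow G m) : ℝ) ^ (1 / (m : ℝ)) ≤ revCapacity G ^
      (Real.log (Fintype.card V) / (Real.log (Fintype.card V) - Real.log (revCapacity G))) := by
  have : Nonempty V :=
    Fintype.card_pos_iff.1 (by exact_mod_cast (zero_lt_one.trans h1).trans h2)
  have hα : (0 : ℝ) < indepNum (strongPow G m) := by
    exact_mod_cast one_le_indepNum (strongPow G m)
  have hLρ : 0 < Real.log (Fintype.card V) - Real.log (revCapacity G) :=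
    sub_pos.2 (Real.log_lt_log (zero_lt_one.trans h1) h2)
  rw [← Real.log_le_log_iff (by positivity) (by positivity), Real.log_rpow hα,
    Real.log_rpow (zero_lt_one.trans h1)]
  calc 1 / (m : ℝ) * Real.log (indepNum (strongPow G m))
      = Real.log (indepNum (strongPow G m)) *
          (Real.log (Fintype.card V) - Real.log (revCapacity G)) /
            (m * (Real.log (Fintype.card V) - Real.log (revCapacity G))) := by
        field_simp
    _ ≤ m * (Real.log (revCapacity G) * Real.log (Fintype.card V)) /
          (m * (Real.log (Fintype.card V) - Real.log (revCapacity G))) :=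
        div_le_div_of_nonneg_right (log_indepNum_mul_le G h1 h2 hm) (by positivity)
    _ = _ := by field_simp

end upperBound

end

/-- the Shannon capacity is controlled by the reversible capacity:
`Θ_REV(G) ≤ Θ(G) ≤ Θ_REV(G)^{log|G|/(log|G| − log Θ_REV(G))}`. -/
theorem shannonCapacity_le_rpow_revCapacity {V : Type*} [Fintype V] (G : SimpleGraph V)
    (h1 : 1 < revCapacity G) (h2 : revCapacity G < Fintype.card V) :
    revCapacity G ≤ shannonCapacity G ∧
    shannonCapacity G ≤
      revCapacity G ^
        (Real.log (Fintype.card V) /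
          (Real.log (Fintype.card V) - Real.log (revCapacity G))) :=
  ⟨revCapacity_le_shannonCapacity G, ciSup_le fun j => by
    exact_mod_cast indepNum_rpow_le_rpow_revCapacity G h1 h2 j.succ_pos⟩
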